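/- Let R be a complex rational function of degree k (the degree of a rational function being the maximum of the degrees of its numerator and denominator in reduced form), and let π(z) = (z²-1)/(2z). Then there exists a rational function R₁ of degree at most k such that R₁(w) = R(σ₊(w))σ₊'(w) + R(σ₋(w))σ₋'(w) for all w ∈ ℂ (outside poles and branch points), where σ±(w) = w ± √(w²+1); that is, the direct image under π of a meromorphic 1-form R(z)dz of degree k on the Riemann sphere is a meromorphic 1-form R₁(w)dw of degree at most k. -/
import Mathlib


/-- A branch of the complex square root. -/
noncomputable def csqrt (w : ℂ) : ℂ := w ^ ((1:ℂ)/2)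


open Polynomial Finset


noncomputable def lucV : ℕ → Polynomial ℂ
  | 0 => 2
  | 1 => 2 * X
  | (n+2) => 2 * X * lucV (n+1) + lucV n

noncomputable def lucD : ℕ → Polynomial ℂ
  | 0 => 0
  | 1 => 2
  | (n+2) => 2 * X * lucD (n+1) + lucD n

lemma lucV_natDegree_le : ∀ n, (lucV n).natDegree ≤ n := by
  have key : ∀ n, (lucV n).natDegree ≤ n ∧ (lucV (n+1)).natDegree ≤ n+1 := by
    intro n
    induction n with
    | zero => constructor <;> simp [lucV] <;>
        exact (natDegree_mul_le).trans (by simp [natDegree_X_le])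
    | succ m ih =>
      refine ⟨ih.2, ?_⟩
      show ((2 * X * lucV (m+1) + lucV m).natDegree) ≤ m + 2
      refine (natDegree_add_le _ _).trans (max_le ?_ (ih.1.trans (by omega)))
      refine (natDegree_mul_le).trans ?_
      have : (2 * X : Polynomial ℂ).natDegree ≤ 1 :=
        natDegree_mul_le.trans (by simp [natDegree_X_le])
      omega
  exact fun n => (key n).1

lemma lucD_natDegree_le : ∀ n, (lucD n).natDegree ≤ n - 1 := by
  have key : ∀ n, (lucD n).natDegree ≤ n - 1 ∧ (lucD (n+1)).natDegree ≤ n := by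
    intro n
    induction n with
    | zero => constructor <;> simp [lucD]
    | succ m ih =>
      refine ⟨ih.2, ?_⟩
      show ((2 * X * lucD (m+1) + lucD m).natDegree) ≤ m + 1
      refine (natDegree_add_le _ _).trans (max_le ?_ (ih.1.trans (by omega)))
      refine (natDegree_mul_le).trans ?_
      have h2 : (2 * X : Polynomial ℂ).natDegree ≤ 1 :=
        natDegree_mul_le.trans (by simp [natDegree_X_le])
      have := ih.2
      omega
  exact fun n => (key n).1

section evals
variable {w s : ℂ} (hs : s ^ 2 = w ^ 2 + 1)

include hs in
lemma luc_eval : ∀ n : ℕ, ((w+s)^n + (w-s)^n = (lucV n).eval w)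
    ∧ ((w+s)^n - (w-s)^n = s * (lucD n).eval w) := by
  have key : ∀ n : ℕ,
      (((w+s)^n + (w-s)^n = (lucV n).eval w) ∧ ((w+s)^n - (w-s)^n = s * (lucD n).eval w)) ∧
      (((w+s)^(n+1) + (w-s)^(n+1) = (lucV (n+1)).eval w) ∧
        ((w+s)^(n+1) - (w-s)^(n+1) = s * (lucD (n+1)).eval w)) := by
    intro n
    induction n with
    | zero =>
      refine ⟨⟨by norm_num [lucV], by simp [lucD]⟩, ⟨by simp [lucV]; ring, by simp [lucD]; ring⟩⟩
    | succ m ih =>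
      have e1 : (w+s)^(m+2) = 2*w*(w+s)^(m+1) + (w+s)^m := by
        linear_combination (w+s)^m * hs
      have e2 : (w-s)^(m+2) = 2*w*(w-s)^(m+1) + (w-s)^m := by
        linear_combination (w-s)^m * hs
      refine ⟨ih.2, ?_, ?_⟩
      · show _ = (2 * X * lucV (m+1) + lucV m).eval w
        simp only [eval_add, eval_mul, eval_ofNat, eval_X]
        linear_combination e1 + e2 + 2*w*ih.2.1 + ih.1.1
      · show _ = s * (2 * X * lucD (m+1) + lucD m).eval w
        simp only [eval_add, eval_mul, eval_ofNat, eval_X]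
        linear_combination e1 - e2 + 2*w*ih.2.2 + ih.1.2
  exact fun n => (key n).1
end evals

section evals2
variable {w s : ℂ} (hs : s ^ 2 = w ^ 2 + 1)

include hs in
lemma pow_prod_plus {a b : ℕ} (h : b ≤ a) :
    (w+s)^a * (w-s)^b = (-1)^b * (w+s)^(a-b) := by
  have e : (w+s)^a = (w+s)^(a-b) * (w+s)^b := by rw [← pow_add]; congr 1; omega
  have e2 : ((w+s)*(w-s))^b = (-1 : ℂ)^b := by
    congr 1; linear_combination -hs
  calc (w+s)^a * (w-s)^b = (w+s)^(a-b) * ((w+s)*(w-s))^b := by rw [e, mul_pow]; ring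
    _ = (-1)^b * (w+s)^(a-b) := by rw [e2]; ring

include hs in
lemma pow_prod_minus {a b : ℕ} (h : b ≤ a) :
    (w-s)^a * (w+s)^b = (-1)^b * (w-s)^(a-b) := by
  have e : (w-s)^a = (w-s)^(a-b) * (w-s)^b := by rw [← pow_add]; congr 1; omega
  have e2 : ((w+s)*(w-s))^b = (-1 : ℂ)^b := by
    congr 1; linear_combination -hs
  calc (w-s)^a * (w+s)^b = (w-s)^(a-b) * ((w+s)*(w-s))^b := by rw [e, mul_pow]; ring
    _ = (-1)^b * (w-s)^(a-b) := by rw [e2]; ring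

end evals2

/-- the polynomial expressing `σ₊^a σ₋^b - σ₊^b σ₋^a = s * (Epoly a b)(w)` -/
noncomputable def Epoly (a b : ℕ) : Polynomial ℂ :=
  if b ≤ a then ((-1 : ℂ)^b) • lucD (a-b) else (-(-1 : ℂ)^a) • lucD (b-a)

/-- the polynomial expressing `σ₊^a σ₋^b + σ₊^b σ₋^a = (Fpoly a b)(w)` -/
noncomputable def Fpoly (a b : ℕ) : Polynomial ℂ :=
  if b ≤ a then ((-1 : ℂ)^b) • lucV (a-b) else ((-1 : ℂ)^a) • lucV (b-a)

lemma Epoly_eval {w s : ℂ} (hs : s ^ 2 = w ^ 2 + 1) (a b : ℕ) :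
    (w+s)^a * (w-s)^b - (w+s)^b * (w-s)^a = s * (Epoly a b).eval w := by
  unfold Epoly
  by_cases h : b ≤ a
  · rw [if_pos h, eval_smul, smul_eq_mul]
    rw [pow_prod_plus hs h, show (w+s)^b * (w-s)^a = (w-s)^a * (w+s)^b by ring,
      pow_prod_minus hs h]
    have := (luc_eval hs (a-b)).2
    linear_combination (-1:ℂ)^b * this
  · rw [if_neg h, eval_smul, smul_eq_mul]
    have h' : a ≤ b := le_of_not_ge h
    rw [show (w+s)^a * (w-s)^b = (w-s)^b * (w+s)^a by ring,
      show (w+s)^b * (w-s)^a = (w+s)^b * (w-s)^a by ring,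
      pow_prod_minus hs h', pow_prod_plus hs h']
    have := (luc_eval hs (b-a)).2
    linear_combination (-(-1:ℂ)^a) * this

lemma Fpoly_eval {w s : ℂ} (hs : s ^ 2 = w ^ 2 + 1) (a b : ℕ) :
    (w+s)^a * (w-s)^b + (w+s)^b * (w-s)^a = (Fpoly a b).eval w := by
  unfold Fpoly
  by_cases h : b ≤ a
  · rw [if_pos h, eval_smul, smul_eq_mul]
    rw [pow_prod_plus hs h, show (w+s)^b * (w-s)^a = (w-s)^a * (w+s)^b by ring,
      pow_prod_minus hs h]
    have := (luc_eval hs (a-b)).1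
    linear_combination (-1:ℂ)^b * this
  · rw [if_neg h, eval_smul, smul_eq_mul]
    have h' : a ≤ b := le_of_not_ge h
    rw [show (w+s)^a * (w-s)^b = (w-s)^b * (w+s)^a by ring,
      pow_prod_minus hs h', pow_prod_plus hs h']
    have := (luc_eval hs (b-a)).1
    linear_combination (-1:ℂ)^a * this

noncomputable def Apoly (P Q : Polynomial ℂ) : Polynomial ℂ :=
  ∑ i ∈ range (P.natDegree + 1), ∑ j ∈ range (Q.natDegree + 1),
    (P.coeff i * Q.coeff j) • Epoly (i+1) j

noncomputable def Bpoly (Q : Polynomial ℂ) : Polynomial ℂ :=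
  ∑ i ∈ range (Q.natDegree + 1), ∑ j ∈ range (Q.natDegree + 1),
    (Q.coeff i * Q.coeff j / 2) • Fpoly i j

lemma Apoly_natDegree_le (P Q : Polynomial ℂ) :
    (Apoly P Q).natDegree ≤ max P.natDegree Q.natDegree := by
  refine natDegree_sum_le_of_forall_le _ _ (fun i hi => ?_)
  refine natDegree_sum_le_of_forall_le _ _ (fun j hj => ?_)
  simp only [mem_range] at hi hj
  refine (natDegree_smul_le _ _).trans ?_
  unfold Epoly
  by_cases h : j ≤ i + 1
  · rw [if_pos h]
    refine (natDegree_smul_le _ _).trans ((lucD_natDegree_le _).trans ?_)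
    have : i + 1 - j - 1 ≤ i := by omega
    exact this.trans (le_max_of_le_left (by omega))
  · rw [if_neg h]
    refine (natDegree_smul_le _ _).trans ((lucD_natDegree_le _).trans ?_)
    exact le_max_of_le_right (by omega)

lemma Bpoly_natDegree_le (Q : Polynomial ℂ) :
    (Bpoly Q).natDegree ≤ Q.natDegree := by
  refine natDegree_sum_le_of_forall_le _ _ (fun i hi => ?_)
  refine natDegree_sum_le_of_forall_le _ _ (fun j hj => ?_)
  simp only [mem_range] at hi hj
  refine (natDegree_smul_le _ _).trans ?_
  unfold Fpoly
  by_cases h : j ≤ i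
  · rw [if_pos h]
    exact (natDegree_smul_le _ _).trans ((lucV_natDegree_le _).trans (by omega))
  · rw [if_neg h]
    exact (natDegree_smul_le _ _).trans ((lucV_natDegree_le _).trans (by omega))

lemma Bpoly_eval {w s : ℂ} (hs : s ^ 2 = w ^ 2 + 1) (Q : Polynomial ℂ) :
    (Bpoly Q).eval w = Q.eval (w + s) * Q.eval (w - s) := by
  rw [eval_eq_sum_range (p := Q) (x := w + s), eval_eq_sum_range (p := Q) (x := w - s)]
  rw [sum_mul_sum]
  unfold Bpoly
  rw [eval_finset_sum]
  have key : ∀ i j : ℕ, ((Q.coeff i * Q.coeff j / 2) • Fpoly i j).eval w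
      = (Q.coeff i * (w+s)^i * (Q.coeff j * (w-s)^j)) / 2
        + (Q.coeff j * (w+s)^j * (Q.coeff i * (w-s)^i)) / 2 := by
    intro i j
    rw [eval_smul, smul_eq_mul, ← Fpoly_eval hs i j]
    ring
  calc ∑ i ∈ range (Q.natDegree + 1), (∑ j ∈ range (Q.natDegree + 1),
          ((Q.coeff i * Q.coeff j / 2) • Fpoly i j)).eval w
      = ∑ i ∈ range (Q.natDegree + 1), ∑ j ∈ range (Q.natDegree + 1),
          ((Q.coeff i * (w+s)^i * (Q.coeff j * (w-s)^j)) / 2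
            + (Q.coeff j * (w+s)^j * (Q.coeff i * (w-s)^i)) / 2) := by
        refine sum_congr rfl (fun i _ => ?_)
        rw [eval_finset_sum]
        exact sum_congr rfl (fun j _ => key i j)
    _ = ∑ i ∈ range (Q.natDegree + 1), ∑ j ∈ range (Q.natDegree + 1),
          Q.coeff i * (w+s)^i * (Q.coeff j * (w-s)^j) := by
        simp only [sum_add_distrib]
        have hswap : ∑ i ∈ range (Q.natDegree + 1), ∑ j ∈ range (Q.natDegree + 1),
            (Q.coeff j * (w+s)^j * (Q.coeff i * (w-s)^i)) / 2
            = ∑ i ∈ range (Q.natDegree + 1), ∑ j ∈ range (Q.natDegree + 1),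
            (Q.coeff i * (w+s)^i * (Q.coeff j * (w-s)^j)) / 2 := Finset.sum_comm
        rw [hswap, ← sum_add_distrib]
        refine sum_congr rfl (fun i _ => ?_)
        rw [← sum_add_distrib]
        exact sum_congr rfl (fun j _ => by ring)
    _ = _ := rfl

lemma Apoly_eval {w s : ℂ} (hs : s ^ 2 = w ^ 2 + 1) (P Q : Polynomial ℂ) :
    s * (Apoly P Q).eval w
      = P.eval (w+s) * (w+s) * Q.eval (w-s) - P.eval (w-s) * (w-s) * Q.eval (w+s) := by
  rw [eval_eq_sum_range (p := Q) (x := w + s), eval_eq_sum_range (p := Q) (x := w - s),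
    eval_eq_sum_range (p := P) (x := w + s), eval_eq_sum_range (p := P) (x := w - s)]
  unfold Apoly
  rw [eval_finset_sum, mul_sum]
  simp only [sum_mul]
  rw [← sum_sub_distrib]
  refine sum_congr rfl (fun i _ => ?_)
  rw [eval_finset_sum]
  simp only [mul_sum]
  rw [← sum_sub_distrib]
  refine sum_congr rfl (fun j _ => ?_)
  rw [eval_smul, smul_eq_mul]
  have := Epoly_eval hs (i+1) j
  rw [pow_succ, pow_succ] at this
  linear_combination (-(P.coeff i * Q.coeff j)) * this

lemma csqrt_sq {x : ℂ} (hx : x ≠ 0) : csqrt x ^ 2 = x := by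
  rw [csqrt, sq, ← Complex.cpow_add _ _ hx]
  norm_num

lemma csqrt_real {r : ℝ} (hr : 0 ≤ r) : csqrt (r : ℂ) = (Real.sqrt r : ℂ) := by
  rw [csqrt, Real.sqrt_eq_rpow, Complex.ofReal_cpow hr]
  push_cast
  norm_num

lemma exists_good (Q : Polynomial ℂ) (hQ : Q ≠ 0) :
    ∃ w : ℂ, w ^ 2 + 1 ≠ 0 ∧ Q.eval (w + csqrt (w ^ 2 + 1)) ≠ 0 ∧
      Q.eval (w - csqrt (w ^ 2 + 1)) ≠ 0 := by
  set φ : ℝ → ℝ := fun x => x + Real.sqrt (x^2+1) with hφ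
  set ψ : ℝ → ℝ := fun x => x - Real.sqrt (x^2+1) with hψ
  have hsq : ∀ x : ℝ, Real.sqrt (x^2+1) ^ 2 = x^2+1 := fun x =>
    Real.sq_sqrt (by positivity)
  have hφpos : ∀ x : ℝ, 0 ≤ x → 0 < φ x := by
    intro x hx
    have : 0 < Real.sqrt (x^2+1) := Real.sqrt_pos.mpr (by positivity)
    simp only [hφ]; linarith
  have hφmono : Set.InjOn φ (Set.Ici 0) := by
    have : StrictMonoOn φ (Set.Ici 0) := by
      intro a ha b hb hab
      simp only [hφ]
      have h1 : a^2 + 1 < b^2 + 1 := by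
        have : a^2 < b^2 := by nlinarith [Set.mem_Ici.mp ha]
        linarith
      have := Real.sqrt_lt_sqrt (by positivity) h1
      linarith
    exact this.injOn
  have hprod : ∀ x : ℝ, φ x * ψ x = -1 := by
    intro x
    simp only [hφ, hψ]
    have := hsq x
    nlinarith [this]
  have hψinj : Set.InjOn ψ (Set.Ici 0) := by
    intro a ha b hb hab
    apply hφmono ha hb
    have ha' := (hφpos a (Set.mem_Ici.mp ha)).ne'
    have hb' := (hφpos b (Set.mem_Ici.mp hb)).ne'
    have h1 : φ a * ψ a = φ b * ψ b := by rw [hprod, hprod]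
    have hψa : ψ a ≠ 0 := by
      intro h; rw [h, mul_zero] at h1; rw [hprod] at h1; norm_num at h1
    rw [hab] at h1
    exact mul_right_cancel₀ (by rw [← hab] at h1 ⊢; exact hψa) h1
  -- complexified
  have hcs : ∀ x : ℝ, csqrt ((x:ℂ)^2 + 1) = (Real.sqrt (x^2+1) : ℂ) := by
    intro x
    have : ((x:ℂ)^2 + 1) = ((x^2 + 1 : ℝ) : ℂ) := by push_cast; ring
    rw [this, csqrt_real (by positivity)]
  have hfeq : ∀ x : ℝ, (x:ℂ) + csqrt ((x:ℂ)^2+1) = ((φ x : ℝ) : ℂ) := by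
    intro x; rw [hcs]; simp [hφ]
  have hgeq : ∀ x : ℝ, (x:ℂ) - csqrt ((x:ℂ)^2+1) = ((ψ x : ℝ) : ℂ) := by
    intro x; rw [hcs]; push_cast [hψ]; ring
  have hroots : Set.Finite {z : ℂ | Q.eval z = 0} := Polynomial.finite_setOf_isRoot hQ
  have hS1 : Set.Finite {x : ℝ | x ∈ Set.Ici (0:ℝ) ∧ Q.eval ((φ x : ℝ) : ℂ) = 0} := by
    apply Set.Finite.of_finite_image (f := fun x : ℝ => ((φ x : ℝ) : ℂ))
    · exact hroots.subset (by rintro z ⟨x, ⟨_, hx⟩, rfl⟩; exact hx)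
    · intro a ha b hb hab
      simp only at hab
      exact hφmono ha.1 hb.1 (by exact_mod_cast hab)
  have hS2 : Set.Finite {x : ℝ | x ∈ Set.Ici (0:ℝ) ∧ Q.eval ((ψ x : ℝ) : ℂ) = 0} := by
    apply Set.Finite.of_finite_image (f := fun x : ℝ => ((ψ x : ℝ) : ℂ))
    · exact hroots.subset (by rintro z ⟨x, ⟨_, hx⟩, rfl⟩; exact hx)
    · intro a ha b hb hab
      simp only at hab
      exact hψinj ha.1 hb.1 (by exact_mod_cast hab)
  have hinf := (Set.Ici_infinite (0:ℝ)).diff (hS1.union hS2)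
  obtain ⟨x, hx⟩ := hinf.nonempty
  simp only [Set.mem_diff, Set.mem_union, Set.mem_setOf_eq, not_or, not_and] at hx
  refine ⟨(x:ℂ), ?_, ?_, ?_⟩
  · have : ((x:ℂ)^2 + 1) = ((x^2 + 1 : ℝ) : ℂ) := by push_cast; ring
    rw [this]
    exact_mod_cast (by positivity : (x:ℝ)^2 + 1 ≠ 0)
  · rw [hfeq]; exact hx.2.1 hx.1
  · rw [hgeq]; exact hx.2.2 hx.1

/-- The direct image under `π(z) = (z²-1)/(2z)` of a meromorphic 1-form `R(z)dz` of
degree `k` on the Riemann sphere (degree = max of degrees of numerator and denominator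
in reduced form) is a meromorphic 1-form `R₁(w)dw` of degree at most `k`: away from
poles and branch points, `R₁(w) = R(σ₊(w))σ₊'(w) + R(σ₋(w))σ₋'(w)` with
`σ±(w) = w ± √(w²+1)`. -/
theorem direct_image_degree_le (P Q : Polynomial ℂ) (hQ : Q ≠ 0)
    (hred : IsCoprime P Q) (k : ℕ) (hk : k = max P.natDegree Q.natDegree) :
    ∃ P₁ Q₁ : Polynomial ℂ, Q₁ ≠ 0 ∧ IsCoprime P₁ Q₁ ∧
      max P₁.natDegree Q₁.natDegree ≤ k ∧
      ∀ w : ℂ, w ^ 2 + 1 ≠ 0 →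
        Q.eval (w + csqrt (w ^ 2 + 1)) ≠ 0 → Q.eval (w - csqrt (w ^ 2 + 1)) ≠ 0 →
        Q₁.eval w ≠ 0 →
        P₁.eval w / Q₁.eval w
          = (P.eval (w + csqrt (w ^ 2 + 1)) / Q.eval (w + csqrt (w ^ 2 + 1)))
              * (1 + w / csqrt (w ^ 2 + 1))
            + (P.eval (w - csqrt (w ^ 2 + 1)) / Q.eval (w - csqrt (w ^ 2 + 1)))
              * (1 - w / csqrt (w ^ 2 + 1)) := by
  classical
  set A := Apoly P Q with hA
  set B := Bpoly Q with hB
  have hBne : B ≠ 0 := by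
    obtain ⟨w, hw1, hw2, hw3⟩ := exists_good Q hQ
    intro h
    have hs : (csqrt (w^2+1))^2 = w^2+1 := csqrt_sq hw1
    have hev := Bpoly_eval hs Q
    rw [← hB, h] at hev
    simp only [Polynomial.eval_zero] at hev
    exact mul_ne_zero hw2 hw3 hev.symm
  set g := GCDMonoid.gcd A B with hg
  have hgne : g ≠ 0 := by
    intro h
    exact hBne ((gcd_eq_zero_iff A B).mp h).2
  refine ⟨A / g, B / g, ?_, ?_, ?_, ?_⟩
  · intro h
    apply hBne
    have := EuclideanDomain.mul_div_cancel' hgne (gcd_dvd_right A B)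
    rw [h, mul_zero] at this
    exact this.symm
  · exact isCoprime_div_gcd_div_gcd hBne
  · have hdvdA : A / g ∣ A := by
      refine ⟨g, ?_⟩
      rw [mul_comm]
      exact (EuclideanDomain.mul_div_cancel' hgne (gcd_dvd_left A B)).symm
    have hdvdB : B / g ∣ B := by
      refine ⟨g, ?_⟩
      rw [mul_comm]
      exact (EuclideanDomain.mul_div_cancel' hgne (gcd_dvd_right A B)).symm
    have hdB : (B / g).natDegree ≤ k :=
      (Polynomial.natDegree_le_of_dvd hdvdB hBne).trans
        ((Bpoly_natDegree_le Q).trans (by omega))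
    rcases eq_or_ne A 0 with hA0 | hA0
    · rw [hA0]
      simp only [EuclideanDomain.zero_div, Polynomial.natDegree_zero]
      exact max_le (by omega) hdB
    · exact max_le ((Polynomial.natDegree_le_of_dvd hdvdA hA0).trans
        ((Apoly_natDegree_le P Q).trans (by omega))) hdB
  · intro w h1 h2 h3 h4
    set s := csqrt (w^2+1) with hsdef
    have hs : s ^ 2 = w ^ 2 + 1 := csqrt_sq h1
    have hsne : s ≠ 0 := by
      intro h
      apply h1
      rw [← hs, h]
      ring
    have hBev : B.eval w = Q.eval (w+s) * Q.eval (w-s) := Bpoly_eval hs Q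
    have hAev := Apoly_eval hs P Q
    have hBevne : B.eval w ≠ 0 := by rw [hBev]; exact mul_ne_zero h2 h3
    have hgB : g * (B / g) = B :=
      EuclideanDomain.mul_div_cancel' hgne (gcd_dvd_right A B)
    have hgA : g * (A / g) = A :=
      EuclideanDomain.mul_div_cancel' hgne (gcd_dvd_left A B)
    have hgev : g.eval w ≠ 0 := by
      intro h
      apply hBevne
      rw [← hgB, Polynomial.eval_mul, h, zero_mul]
    have hevA : A.eval w = g.eval w * (A / g).eval w := by
      conv_lhs => rw [← hgA]
      rw [Polynomial.eval_mul]
    have hevB : B.eval w = g.eval w * (B / g).eval w := by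
      conv_lhs => rw [← hgB]
      rw [Polynomial.eval_mul]
    have hfrac : (A / g).eval w / (B / g).eval w = A.eval w / B.eval w := by
      rw [hevA, hevB, mul_div_mul_left _ _ hgev]
    have e1 : A.eval w / B.eval w = (s * A.eval w) / (s * B.eval w) :=
      (mul_div_mul_left _ _ hsne).symm
    rw [hfrac, e1, hAev, hBev]
    field_simp
    ring
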